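/- arXiv:2002.05901 — 3 statements merged into one kernel-verified Lean document; each statement's English description precedes it below -/
import Mathlib

section
/- The matrix inverse map X ↦ X⁻¹ is matrix convex on positive definite matrices: for symmetric positive definite X, Y and θ ∈ [0,1], (θX + (1-θ)Y)⁻¹ ⪯ θX⁻¹ + (1-θ)Y⁻¹. -/
/-!
The block matrix `[[X, 1], [1, X⁻¹]]` is positive semidefinite, its Schur complement
`X⁻¹ - 1 * X⁻¹ * 1` being zero. Positive semidefinite matrices form a convex cone, so the convex
combination `[[θX + (1-θ)Y, 1], [1, θX⁻¹ + (1-θ)Y⁻¹]]` is positive semidefinite as well, and its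
Schur complement with respect to the positive definite corner `θX + (1-θ)Y` is exactly
`θX⁻¹ + (1-θ)Y⁻¹ - (θX + (1-θ)Y)⁻¹`.
-/

open ComplexOrder

namespace Matrix

variable {n 𝕜 : Type*} [RCLike 𝕜]

theorem PosDef.convexComb {X Y : Matrix n n 𝕜} (hX : X.PosDef) (hY : Y.PosDef) {θ : ℝ}
    (hθ0 : 0 ≤ θ) (hθ1 : θ ≤ 1) : (θ • X + (1 - θ) • Y).PosDef := by
  rcases hθ0.eq_or_lt with rfl | hθ
  · simpa using hY
  · exact (hX.smul hθ).add_posSemidef (hY.posSemidef.smul (sub_nonneg.2 hθ1))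

variable [Fintype n] [DecidableEq n]

theorem PosDef.posSemidef_fromBlocks_one_inv {X : Matrix n n 𝕜} (hX : X.PosDef) :
    (fromBlocks X 1 1 X⁻¹).PosSemidef := by
  have := hX.isUnit.invertible
  simpa using (PosDef.fromBlocks₁₁ (1 : Matrix n n 𝕜) X⁻¹ hX).2 (by simpa using PosSemidef.zero)

theorem PosDef.inv_convexComb_le {X Y : Matrix n n 𝕜} (hX : X.PosDef) (hY : Y.PosDef) {θ : ℝ}
    (hθ0 : 0 ≤ θ) (hθ1 : θ ≤ 1) :
    (θ • X⁻¹ + (1 - θ) • Y⁻¹ - (θ • X + (1 - θ) • Y)⁻¹).PosSemidef := by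
  have hC := hX.convexComb hY hθ0 hθ1
  have := hC.isUnit.invertible
  have hblocks : (θ • fromBlocks X 1 1 X⁻¹ + (1 - θ) • fromBlocks Y 1 1 Y⁻¹).PosSemidef :=
    (hX.posSemidef_fromBlocks_one_inv.smul hθ0).add
      (hY.posSemidef_fromBlocks_one_inv.smul (sub_nonneg.2 hθ1))
  have hone : θ • (1 : Matrix n n 𝕜) + (1 - θ) • 1 = 1 := by rw [← add_smul]; simp
  rw [fromBlocks_smul, fromBlocks_smul, fromBlocks_add, hone] at hblocks
  simpa using (PosDef.fromBlocks₁₁ 1 (θ • X⁻¹ + (1 - θ) • Y⁻¹) hC).1 (by simpa using hblocks)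

end Matrix

theorem inv_matrix_convex_posDef_general {n : ℕ} (X Y : Matrix (Fin n) (Fin n) ℝ)
    (hX : X.PosDef) (hY : Y.PosDef)
    (θ : ℝ) (hθ0 : 0 ≤ θ) (hθ1 : θ ≤ 1) :
    (θ • X⁻¹ + (1 - θ) • Y⁻¹ - (θ • X + (1 - θ) • Y)⁻¹).PosSemidef :=
  hX.inv_convexComb_le hY hθ0 hθ1

/-- Matrix inversion is matrix convex on symmetric positive definite matrices:
`(θX + (1-θ)Y)⁻¹ ⪯ θX⁻¹ + (1-θ)Y⁻¹`. -/
theorem inv_matrix_convex_posDef {n : ℕ} (X Y : Matrix (Fin n) (Fin n) ℝ)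
    (hXs : X.IsSymm) (hYs : Y.IsSymm) (hX : X.PosDef) (hY : Y.PosDef)
    (θ : ℝ) (hθ0 : 0 ≤ θ) (hθ1 : θ ≤ 1) :
    (θ • X⁻¹ + (1 - θ) • Y⁻¹ - (θ • X + (1 - θ) • Y)⁻¹).PosSemidef :=
  inv_matrix_convex_posDef_general X Y hX hY θ hθ0 hθ1
end

section
/- (Composition Rule 4) If h_s is matrix concave and matrix nondecreasing, and h_m is matrix concave, then h = h_s ∘ h_m is matrix concave. -/
/-- Composition rule: matrix convexity/concavity and monotonicity are with respect to
the Loewner order, where `A ⪯ B` is encoded as `(B - A).PosSemidef`. -/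
theorem composition_rule_4 {n m k : ℕ}
    (Sm : Set (Matrix (Fin n) (Fin n) ℝ)) (Ss : Set (Matrix (Fin m) (Fin m) ℝ))
    (hm : Matrix (Fin n) (Fin n) ℝ → Matrix (Fin m) (Fin m) ℝ)
    (hs : Matrix (Fin m) (Fin m) ℝ → Matrix (Fin k) (Fin k) ℝ)
    -- `Sm` and `Ss` are convex
    (hSmConv : ∀ X ∈ Sm, ∀ Y ∈ Sm, ∀ θ : ℝ, 0 ≤ θ → θ ≤ 1 → θ • X + (1 - θ) • Y ∈ Sm)
    (hSsConv : ∀ A ∈ Ss, ∀ B ∈ Ss, ∀ θ : ℝ, 0 ≤ θ → θ ≤ 1 → θ • A + (1 - θ) • B ∈ Ss)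
    -- the image of `h_m` lies in the domain of `h_s`
    (hImage : ∀ X ∈ Sm, hm X ∈ Ss)
    -- `h_s` is matrix concave on `Ss`
    (hsShape : ∀ A ∈ Ss, ∀ B ∈ Ss, ∀ θ : ℝ, 0 ≤ θ → θ ≤ 1 →
      (hs (θ • A + (1 - θ) • B) - (θ • hs A + (1 - θ) • hs B)).PosSemidef)
    -- `h_s` is matrix nondecreasing on `Ss`
    (hsMono : ∀ A ∈ Ss, ∀ B ∈ Ss, (A - B).PosSemidef → (hs A - hs B).PosSemidef)
    -- `h_m` is matrix concave on `Sm`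
    (hmShape : ∀ X ∈ Sm, ∀ Y ∈ Sm, ∀ θ : ℝ, 0 ≤ θ → θ ≤ 1 →
      (hm (θ • X + (1 - θ) • Y) - (θ • hm X + (1 - θ) • hm Y)).PosSemidef) :
    ∀ X ∈ Sm, ∀ Y ∈ Sm, ∀ θ : ℝ, 0 ≤ θ → θ ≤ 1 →
      (hs (hm (θ • X + (1 - θ) • Y)) - (θ • hs (hm X) + (1 - θ) • hs (hm Y))).PosSemidef := by
  intro X hX Y hY θ h0 h1
  have hXY := hSmConv X hX Y hY θ h0 h1
  have hA := hImage X hX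
  have hB := hImage Y hY
  have hcomb := hSsConv _ hA _ hB θ h0 h1
  have h2 := hsMono _ (hImage _ hXY) _ hcomb (hmShape X hX Y hY θ h0 h1)
  have h3 := hsShape _ hA _ hB θ h0 h1
  have := h2.add h3
  convert this using 1
  abel
end

section
/- (Theorem 2) Fix symmetric H, positive definite matrices P and Σ, orthogonal V, and σ² > 0. Define F(D₁, D₂) = tr((P + σ⁻²VᵀD₁V)⁻¹) + γ·tr((H(P + σ⁻²VᵀD₁V)⁻¹H + Σ)⁻¹ + σ⁻²VᵀD₂V)⁻¹ for γ > 0, where D₁, D₂ range over diagonal matrices with diagonal entries in [0,1]. Then F is jointly convex in (D₁, D₂). -/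
/-!
Write `A = P + σ⁻² Vᵀ D₁ V` and `M = (H A⁻¹ H + Σ)⁻¹ + σ⁻² Vᵀ D₂ V`, so that
`F = tr A⁻¹ + γ tr M⁻¹`. In the Loewner order `A` is affine and `M` is jointly concave in
`(D₁, D₂)`: by the Woodbury identity `(H A⁻¹ H + Σ)⁻¹ = Σ⁻¹ - Σ⁻¹ H (A + H Σ⁻¹ H)⁻¹ H Σ⁻¹`,
and matrix inversion is operator convex. As inversion is also operator antitone and the trace is
monotone, `tr M⁻¹` is convex whenever `M` is concave with positive definite values.
Operator convexity and antitonicity of the inverse both follow from the variational formula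
`xᵀ W⁻¹ x = max_y (2 yᵀ x - yᵀ W y)`.
-/

open Matrix
open scoped MatrixOrder

namespace Matrix

variable {n : Type*}

theorem PosDef.isGreatest_dotProduct_inv_mulVec [Fintype n] [DecidableEq n] {W : Matrix n n ℝ}
    (hW : W.PosDef) (x : n → ℝ) :
    IsGreatest (Set.range fun y => 2 * (y ⬝ᵥ x) - y ⬝ᵥ W *ᵥ y) (x ⬝ᵥ W⁻¹ *ᵥ x) := by
  have hWW : W * W⁻¹ = 1 := mul_nonsing_inv W (isUnit_iff_isUnit_det W |>.mp hW.isUnit)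
  have hWt : Wᵀ = W := by simpa using hW.isHermitian.eq
  have square (y : n → ℝ) : x ⬝ᵥ W⁻¹ *ᵥ x - (2 * (y ⬝ᵥ x) - y ⬝ᵥ W *ᵥ y)
      = (y - W⁻¹ *ᵥ x) ⬝ᵥ W *ᵥ (y - W⁻¹ *ᵥ x) := by
    have hx : W *ᵥ W⁻¹ *ᵥ x = x := by rw [mulVec_mulVec, hWW, one_mulVec]
    have hsymm : W⁻¹ *ᵥ x ⬝ᵥ W *ᵥ y = y ⬝ᵥ x := by
      rw [dotProduct_mulVec, ← mulVec_transpose, hWt, hx, dotProduct_comm]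
    rw [mulVec_sub, hx, dotProduct_sub, sub_dotProduct, sub_dotProduct, hsymm,
      dotProduct_comm (W⁻¹ *ᵥ x) x]
    ring
  refine ⟨⟨W⁻¹ *ᵥ x, ?_⟩, ?_⟩
  · have h := square (W⁻¹ *ᵥ x)
    rw [sub_self, zero_dotProduct, sub_eq_zero] at h
    exact h.symm
  · rintro _ ⟨y, rfl⟩
    have h := hW.posSemidef.dotProduct_mulVec_nonneg (y - W⁻¹ *ᵥ x)
    simp only [star_trivial] at h
    linarith [square y]

theorem le_of_forall_dotProduct_mulVec_le [Fintype n] {A B : Matrix n n ℝ} (hA : A.IsHermitian)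
    (hB : B.IsHermitian) (h : ∀ x, x ⬝ᵥ A *ᵥ x ≤ x ⬝ᵥ B *ᵥ x) : A ≤ B := by
  refine le_iff.2 (posSemidef_iff_dotProduct_mulVec.2 ⟨hB.sub hA, fun x => ?_⟩)
  simpa [sub_mulVec, dotProduct_sub] using h x

theorem trace_mono [Fintype n] {A B : Matrix n n ℝ} (h : A ≤ B) : A.trace ≤ B.trace := by
  simpa [trace_sub] using (le_iff.1 h).trace_nonneg

theorem PosSemidef.mul_mul_same_of_isHermitian [Fintype n] {A H : Matrix n n ℝ}
    (hA : A.PosSemidef) (hH : H.IsHermitian) : (H * A * H).PosSemidef := by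
  simpa only [hH.eq] using hA.conjTranspose_mul_mul_same H

theorem convex_setOf_posDef : Convex ℝ {A : Matrix n n ℝ | A.PosDef} :=
  convex_iff_forall_pos.2 fun _ hA _ hB _ _ ha hb _ => (hA.smul ha).add (hB.smul hb)

variable [Fintype n] [DecidableEq n]

theorem antitoneOn_inv : AntitoneOn (fun A : Matrix n n ℝ => A⁻¹) {A | A.PosDef} := by
  intro A hA B hB hAB
  refine le_of_forall_dotProduct_mulVec_le hB.inv.isHermitian hA.inv.isHermitian fun x => ?_
  obtain ⟨⟨y, hy⟩, -⟩ := hB.isGreatest_dotProduct_inv_mulVec x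
  have hyA := (hA.isGreatest_dotProduct_inv_mulVec x).2 ⟨y, rfl⟩
  have hAB_y := (le_iff.1 hAB).dotProduct_mulVec_nonneg y
  simp only [star_trivial, sub_mulVec, dotProduct_sub] at hy hyA hAB_y
  linarith

theorem convexOn_inv : ConvexOn ℝ {A : Matrix n n ℝ | A.PosDef} fun A => A⁻¹ := by
  refine ⟨convex_setOf_posDef, fun A hA B hB a b ha hb hab => ?_⟩
  have hM : (a • A + b • B).PosDef := convex_setOf_posDef hA hB ha hb hab
  refine le_of_forall_dotProduct_mulVec_le hM.inv.isHermitian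
    ((hA.inv.posSemidef.smul ha).add (hB.inv.posSemidef.smul hb)).isHermitian fun x => ?_
  obtain ⟨⟨y, hy⟩, -⟩ := hM.isGreatest_dotProduct_inv_mulVec x
  have hyA := (hA.isGreatest_dotProduct_inv_mulVec x).2 ⟨y, rfl⟩
  have hyB := (hB.isGreatest_dotProduct_inv_mulVec x).2 ⟨y, rfl⟩
  simp only [add_mulVec, smul_mulVec, dotProduct_add, dotProduct_smul, smul_eq_mul]
    at hy hyA hyB ⊢
  obtain rfl : b = 1 - a := by linarith
  rw [← hy]
  nlinarith [mul_le_mul_of_nonneg_left hyA ha, mul_le_mul_of_nonneg_left hyB hb]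

theorem _root_.ConcaveOn.convexOn_trace_inv {E : Type*} [AddCommMonoid E] [SMul ℝ E]
    {s : Set E} {f : E → Matrix n n ℝ} (hf : ConcaveOn ℝ s f) (hpos : ∀ x ∈ s, (f x).PosDef) :
    ConvexOn ℝ s fun x => (f x)⁻¹.trace := by
  refine ⟨hf.1, fun x hx y hy a b ha hb hab => ?_⟩
  calc (f (a • x + b • y))⁻¹.trace ≤ (a • f x + b • f y)⁻¹.trace :=
        trace_mono <| antitoneOn_inv
          (convex_setOf_posDef (hpos x hx) (hpos y hy) ha hb hab)
          (hpos _ (hf.1 hx hy ha hb hab)) (hf.2 hx hy ha hb hab)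
    _ ≤ (a • (f x)⁻¹ + b • (f y)⁻¹).trace :=
        trace_mono <| convexOn_inv.2 (hpos x hx) (hpos y hy) ha hb hab
    _ = a • (f x)⁻¹.trace + b • (f y)⁻¹.trace := by simp only [trace_add, trace_smul]

theorem inv_mul_inv_mul_add_eq_sub {A S H : Matrix n n ℝ} (hA : A.PosDef) (hS : S.PosDef)
    (hH : H.IsHermitian) :
    (H * A⁻¹ * H + S)⁻¹ = S⁻¹ - (H * S⁻¹)ᴴ * (A + H * S⁻¹ * H)⁻¹ * (H * S⁻¹) := by
  have hAA : A⁻¹⁻¹ = A := nonsing_inv_nonsing_inv A ((isUnit_iff_isUnit_det A).1 hA.isUnit)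
  have hW : IsUnit (A⁻¹⁻¹ + H * S⁻¹ * H) := by
    rw [hAA]
    exact (hA.add_posSemidef (hS.inv.posSemidef.mul_mul_same_of_isHermitian hH)).isUnit
  rw [add_comm, add_mul_mul_inv_eq_sub S H A⁻¹ H hS.isUnit hA.inv.isUnit hW, hAA,
    conjTranspose_mul, hH.eq, hS.inv.isHermitian.eq]
  simp only [Matrix.mul_assoc]

theorem concaveOn_inv_mul_inv_mul_add {S H : Matrix n n ℝ} (hS : S.PosDef)
    (hH : H.IsHermitian) :
    ConcaveOn ℝ {A : Matrix n n ℝ | A.PosDef} fun A => (H * A⁻¹ * H + S)⁻¹ := by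
  set K := H * S⁻¹ * H
  have hK : K.PosSemidef := hS.inv.posSemidef.mul_mul_same_of_isHermitian hH
  refine ⟨convex_setOf_posDef, fun A hA B hB a b ha hb hab => ?_⟩
  have hAB := convex_setOf_posDef hA hB ha hb hab
  have hconv := convexOn_inv.2 (hA.add_posSemidef hK) (hB.add_posSemidef hK) ha hb hab
  rw [show a • (A + K) + b • (B + K) = a • A + b • B + K by
    linear_combination (norm := module) hab • K] at hconv
  have hconj := star_left_conjugate_le_conjugate hconv (H * S⁻¹)
  simp only [inv_mul_inv_mul_add_eq_sub hA hS hH, inv_mul_inv_mul_add_eq_sub hB hS hH,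
    inv_mul_inv_mul_add_eq_sub hAB hS hH]
  rw [le_iff] at hconj ⊢
  convert hconj using 1
  obtain rfl : b = 1 - a := by linarith
  simp only [star_eq_conjTranspose, Matrix.mul_add, Matrix.add_mul, Matrix.mul_smul,
    Matrix.smul_mul]
  module

theorem convexOn_trace_inv_add_trace_inv {P S H : Matrix n n ℝ}
    (L : Matrix n n ℝ →ₚ[ℝ] Matrix n n ℝ) (hP : P.PosDef) (hS : S.PosDef) (hH : H.IsHermitian)
    {γ : ℝ} (hγ : 0 ≤ γ) :
    ConvexOn ℝ (Set.Ici 0) fun D : Matrix n n ℝ × Matrix n n ℝ =>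
      (P + L D.1)⁻¹.trace + γ * ((H * (P + L D.1)⁻¹ * H + S)⁻¹ + L D.2)⁻¹.trace := by
  set L₁ := L.toLinearMap ∘ₗ LinearMap.fst ℝ (Matrix n n ℝ) (Matrix n n ℝ)
  set L₂ := L.toLinearMap ∘ₗ LinearMap.snd ℝ (Matrix n n ℝ) (Matrix n n ℝ)
  have hA (D : Matrix n n ℝ × Matrix n n ℝ) (hD : 0 ≤ D) : (P + L D.1).PosDef :=
    hP.add_posSemidef (L.map_nonneg hD.1).posSemidef
  have hM (D : Matrix n n ℝ × Matrix n n ℝ) (hD : 0 ≤ D) :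
      ((H * (P + L D.1)⁻¹ * H + S)⁻¹ + L D.2).PosDef :=
    (PosDef.posSemidef_add ((hA D hD).inv.posSemidef.mul_mul_same_of_isHermitian hH)
      hS).inv.add_posSemidef (L.map_nonneg hD.2).posSemidef
  have hA_concave : ConcaveOn ℝ (Set.Ici 0) fun D : Matrix n n ℝ × Matrix n n ℝ => P + L D.1 :=
    (concaveOn_const P (convex_Ici 0)).add (L₁.concaveOn (convex_Ici 0))
  have hM_concave : ConcaveOn ℝ (Set.Ici 0) fun D : Matrix n n ℝ × Matrix n n ℝ =>
      (H * (P + L D.1)⁻¹ * H + S)⁻¹ + L D.2 :=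
    ((((concaveOn_inv_mul_inv_mul_add hS hH).translate_right P).comp_linearMap L₁).subset
      hA (convex_Ici 0)).add (L₂.concaveOn (convex_Ici 0))
  exact (hA_concave.convexOn_trace_inv hA).add ((hM_concave.convexOn_trace_inv hM).smul hγ)

end Matrix

theorem objective_jointly_convex_general {n : ℕ}
    (H P V Sig : Matrix (Fin n) (Fin n) ℝ) (σ2 γ : ℝ)
    (hH : H.IsSymm) (hP : P.PosDef) (hSig : Sig.PosDef)
    (hσ : 0 < σ2) (hγ : 0 < γ) :
    ∀ X₁ X₂ Y₁ Y₂ : Matrix (Fin n) (Fin n) ℝ,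
      X₁.IsDiag → (∀ i, 0 ≤ X₁ i i ∧ X₁ i i ≤ 1) →
      X₂.IsDiag → (∀ i, 0 ≤ X₂ i i ∧ X₂ i i ≤ 1) →
      Y₁.IsDiag → (∀ i, 0 ≤ Y₁ i i ∧ Y₁ i i ≤ 1) →
      Y₂.IsDiag → (∀ i, 0 ≤ Y₂ i i ∧ Y₂ i i ≤ 1) →
      ∀ θ : ℝ, 0 ≤ θ → θ ≤ 1 →
      (fun D₁ D₂ : Matrix (Fin n) (Fin n) ℝ =>
          ((P + σ2⁻¹ • (Vᵀ * D₁ * V))⁻¹).trace +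
          γ * (((H * (P + σ2⁻¹ • (Vᵀ * D₁ * V))⁻¹ * H + Sig)⁻¹ +
                σ2⁻¹ • (Vᵀ * D₂ * V))⁻¹).trace)
        (θ • X₁ + (1 - θ) • Y₁) (θ • X₂ + (1 - θ) • Y₂) ≤
      θ * (fun D₁ D₂ : Matrix (Fin n) (Fin n) ℝ =>
          ((P + σ2⁻¹ • (Vᵀ * D₁ * V))⁻¹).trace +
          γ * (((H * (P + σ2⁻¹ • (Vᵀ * D₁ * V))⁻¹ * H + Sig)⁻¹ +
                σ2⁻¹ • (Vᵀ * D₂ * V))⁻¹).trace) X₁ X₂ +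
      (1 - θ) * (fun D₁ D₂ : Matrix (Fin n) (Fin n) ℝ =>
          ((P + σ2⁻¹ • (Vᵀ * D₁ * V))⁻¹).trace +
          γ * (((H * (P + σ2⁻¹ • (Vᵀ * D₁ * V))⁻¹ * H + Sig)⁻¹ +
                σ2⁻¹ • (Vᵀ * D₂ * V))⁻¹).trace) Y₁ Y₂ := by
  intro X₁ X₂ Y₁ Y₂ hX₁ hX₁01 hX₂ hX₂01 hY₁ hY₁01 hY₂ hY₂01 θ hθ₀ hθ₁
  have nonneg (D : Matrix (Fin n) (Fin n) ℝ) (hD : D.IsDiag)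
      (h01 : ∀ i, 0 ≤ D i i ∧ D i i ≤ 1) : 0 ≤ D := by
    rw [← hD.diagonal_diag]
    exact (posSemidef_diagonal_iff.2 fun i => (h01 i).1).nonneg
  let L : Matrix (Fin n) (Fin n) ℝ →ₚ[ℝ] Matrix (Fin n) (Fin n) ℝ :=
    .mk₀ (σ2⁻¹ • (LinearMap.mulRight ℝ V ∘ₗ LinearMap.mulLeft ℝ Vᵀ)) fun D hD => by
      simpa using ((hD.posSemidef.conjTranspose_mul_mul_same V).smul (inv_nonneg.2 hσ.le)).nonneg
  exact (convexOn_trace_inv_add_trace_inv L hP hSig (isHermitian_iff_isSymm.2 hH) hγ.le).2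
    (x := (X₁, X₂)) ⟨nonneg X₁ hX₁ hX₁01, nonneg X₂ hX₂ hX₂01⟩
    (y := (Y₁, Y₂)) ⟨nonneg Y₁ hY₁ hY₁01, nonneg Y₂ hY₂ hY₂01⟩ hθ₀ (sub_nonneg.2 hθ₁) (by ring)

/-- Theorem 2: the two-step objective
`F(D₁, D₂) = tr((P + σ⁻²VᵀD₁V)⁻¹)
  + γ·tr(((H(P + σ⁻²VᵀD₁V)⁻¹H + Σ)⁻¹ + σ⁻²VᵀD₂V)⁻¹)`
is jointly convex in `(D₁, D₂)` over diagonal matrices with entries in `[0,1]`. -/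
theorem objective_jointly_convex {n : ℕ}
    (H P V Sig : Matrix (Fin n) (Fin n) ℝ) (σ2 γ : ℝ)
    (hH : H.IsSymm) (hP : P.PosDef) (hSig : Sig.PosDef)
    (hV : Vᵀ * V = 1) (hσ : 0 < σ2) (hγ : 0 < γ) :
    ∀ X₁ X₂ Y₁ Y₂ : Matrix (Fin n) (Fin n) ℝ,
      X₁.IsDiag → (∀ i, 0 ≤ X₁ i i ∧ X₁ i i ≤ 1) →
      X₂.IsDiag → (∀ i, 0 ≤ X₂ i i ∧ X₂ i i ≤ 1) →
      Y₁.IsDiag → (∀ i, 0 ≤ Y₁ i i ∧ Y₁ i i ≤ 1) →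
      Y₂.IsDiag → (∀ i, 0 ≤ Y₂ i i ∧ Y₂ i i ≤ 1) →
      ∀ θ : ℝ, 0 ≤ θ → θ ≤ 1 →
      (fun D₁ D₂ : Matrix (Fin n) (Fin n) ℝ =>
          ((P + σ2⁻¹ • (Vᵀ * D₁ * V))⁻¹).trace +
          γ * (((H * (P + σ2⁻¹ • (Vᵀ * D₁ * V))⁻¹ * H + Sig)⁻¹ +
                σ2⁻¹ • (Vᵀ * D₂ * V))⁻¹).trace)
        (θ • X₁ + (1 - θ) • Y₁) (θ • X₂ + (1 - θ) • Y₂) ≤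
      θ * (fun D₁ D₂ : Matrix (Fin n) (Fin n) ℝ =>
          ((P + σ2⁻¹ • (Vᵀ * D₁ * V))⁻¹).trace +
          γ * (((H * (P + σ2⁻¹ • (Vᵀ * D₁ * V))⁻¹ * H + Sig)⁻¹ +
                σ2⁻¹ • (Vᵀ * D₂ * V))⁻¹).trace) X₁ X₂ +
      (1 - θ) * (fun D₁ D₂ : Matrix (Fin n) (Fin n) ℝ =>
          ((P + σ2⁻¹ • (Vᵀ * D₁ * V))⁻¹).trace +
          γ * (((H * (P + σ2⁻¹ • (Vᵀ * D₁ * V))⁻¹ * H + Sig)⁻¹ +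
                σ2⁻¹ • (Vᵀ * D₂ * V))⁻¹).trace) Y₁ Y₂ :=
  objective_jointly_convex_general H P V Sig σ2 γ hH hP hSig hσ hγ
end
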